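/- arXiv:math/9910068 — 3 statements merged into one kernel-verified Lean document; each statement's English description precedes it below -/
import Mathlib

section
/- Let H be a subgroup of index N in a finitely generated group G, with a weight ω on G inducing growth function γ_ω, and let γ^H_ω(n) = #{h ∈ H : ∂_ω(h) ≤ n}. Then there exists a constant K ≥ 0 such that γ_ω(n − K) ≤ N·γ^H_ω(n) ≤ γ_ω(n + K) for all n. -/
/-- The weight (norm) on a group `G` induced by a weight function `ω` on a generating set
`S`: the infimum of the total weights of words over `S` representing `g`. -/
noncomputable def wordWeight {G : Type*} [Group G] (S : Set G) (ω : G → ℝ) (g : G) : ℝ :=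
  sInf ((fun l : List G => (l.map ω).sum) '' {l : List G | (∀ s ∈ l, s ∈ S) ∧ l.prod = g})

/-- The growth function of `G` with respect to the generating set `S` and weight `ω`:
the number of elements of weight at most `x`. -/
noncomputable def growth {G : Type*} [Group G] (S : Set G) (ω : G → ℝ) (x : ℝ) : ℕ :=
  Nat.card {g : G | wordWeight S ω g ≤ x}

/-- The word length of `g` with respect to the generating set `S`. -/
noncomputable def wordLength {G : Type*} [Group G] (S : Set G) (g : G) : ℕ :=
  sInf {n : ℕ | ∃ l : List G, (∀ s ∈ l, s ∈ S) ∧ l.prod = g ∧ l.length = n}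

set_option linter.unusedSectionVars false

section aux

variable {G : Type*} [Group G] (S : Finset G)
  (hS : Submonoid.closure (S : Set G) = ⊤) (ω : G → ℝ) (hω : ∀ s ∈ S, 0 < ω s)

include hS hω

lemma ww_set_nonempty (g : G) :
    ((fun l : List G => (l.map ω).sum) ''
      {l : List G | (∀ s ∈ l, s ∈ (S : Set G)) ∧ l.prod = g}).Nonempty := by
  obtain ⟨l, hl, hlp⟩ := Submonoid.exists_list_of_mem_closure
    (s := (S : Set G)) (x := g) (by rw [hS]; trivial)
  exact ⟨_, ⟨l, ⟨hl, hlp⟩, rfl⟩⟩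

lemma ww_mem_nonneg {w : ℝ} {g : G}
    (hw : w ∈ (fun l : List G => (l.map ω).sum) ''
      {l : List G | (∀ s ∈ l, s ∈ (S : Set G)) ∧ l.prod = g}) : 0 ≤ w := by
  obtain ⟨l, ⟨hl, -⟩, rfl⟩ := hw
  apply List.sum_nonneg
  intro a ha
  obtain ⟨s, hs, rfl⟩ := List.mem_map.mp ha
  exact (hω s (hl s hs)).le

lemma ww_bddBelow (g : G) :
    BddBelow ((fun l : List G => (l.map ω).sum) ''
      {l : List G | (∀ s ∈ l, s ∈ (S : Set G)) ∧ l.prod = g}) :=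
  ⟨0, fun w hw => ww_mem_nonneg S hS ω hω hw⟩

lemma ww_nonneg (g : G) : 0 ≤ wordWeight (S : Set G) ω g :=
  Real.sInf_nonneg fun _ hw => ww_mem_nonneg S hS ω hω hw

lemma ww_le {g : G} {l : List G} (hl : ∀ s ∈ l, s ∈ (S : Set G)) (hlp : l.prod = g) :
    wordWeight (S : Set G) ω g ≤ (l.map ω).sum :=
  csInf_le (ww_bddBelow S hS ω hω g) ⟨l, ⟨hl, hlp⟩, rfl⟩

lemma ww_mul (a b : G) :
    wordWeight (S : Set G) ω (a * b) ≤
      wordWeight (S : Set G) ω a + wordWeight (S : Set G) ω b := by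
  have key : ∀ w1 ∈ (fun l : List G => (l.map ω).sum) ''
      {l : List G | (∀ s ∈ l, s ∈ (S : Set G)) ∧ l.prod = a},
      ∀ w2 ∈ (fun l : List G => (l.map ω).sum) ''
      {l : List G | (∀ s ∈ l, s ∈ (S : Set G)) ∧ l.prod = b},
      wordWeight (S : Set G) ω (a * b) ≤ w1 + w2 := by
    rintro w1 ⟨l1, ⟨h1, h1p⟩, rfl⟩ w2 ⟨l2, ⟨h2, h2p⟩, rfl⟩
    have := ww_le S hS ω hω (l := l1 ++ l2) (g := a * b)
      (by intro s hs; rcases List.mem_append.mp hs with h | h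
          exacts [h1 s h, h2 s h]) (by rw [List.prod_append, h1p, h2p])
    simpa [List.map_append] using this
  have h1 : ∀ w1 ∈ (fun l : List G => (l.map ω).sum) ''
      {l : List G | (∀ s ∈ l, s ∈ (S : Set G)) ∧ l.prod = a},
      wordWeight (S : Set G) ω (a * b) - w1 ≤ wordWeight (S : Set G) ω b := by
    intro w1 hw1
    apply le_csInf (ww_set_nonempty S hS ω hω b)
    intro w2 hw2
    linarith [key w1 hw1 w2 hw2]
  have h2 : wordWeight (S : Set G) ω (a * b) - wordWeight (S : Set G) ω b ≤
      wordWeight (S : Set G) ω a := by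
    apply le_csInf (ww_set_nonempty S hS ω hω a)
    intro w1 hw1
    linarith [h1 w1 hw1]
  linarith

lemma ball_finite (x : ℝ) : {g : G | wordWeight (S : Set G) ω g ≤ x}.Finite := by
  rcases S.eq_empty_or_nonempty with rfl | hne
  · have : Subsingleton G := by
      constructor
      intro a b
      have ha : a ∈ Submonoid.closure (∅ : Set G) := by
        rw [show ((∅ : Finset G) : Set G) = (∅ : Set G) by simp] at hS; rw [hS]; trivial
      have hb : b ∈ Submonoid.closure (∅ : Set G) := by
        rw [show ((∅ : Finset G) : Set G) = (∅ : Set G) by simp] at hS; rw [hS]; trivial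
      rw [Submonoid.closure_empty, Submonoid.mem_bot] at ha hb
      rw [ha, hb]
    exact Set.toFinite _
  · set m := S.inf' hne ω with hm
    have hmpos : 0 < m := by
      obtain ⟨s, hs, hsval⟩ := S.exists_mem_eq_inf' hne ω
      rw [hm, hsval]; exact hω s hs
    set L := Nat.ceil ((x + 1) / m) with hL
    have hsub : {g : G | wordWeight (S : Set G) ω g ≤ x} ⊆
        (fun l : List G => l.prod) ''
          ((fun l : List {s : G // s ∈ S} => l.map Subtype.val) ''
            {l : List {s : G // s ∈ S} | l.length ≤ L}) := by
      intro g hg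
      obtain ⟨w, hw, hwlt⟩ := Real.lt_sInf_add_pos (ww_set_nonempty S hS ω hω g)
        (ε := 1) one_pos
      obtain ⟨l, ⟨hl, hlp⟩, rfl⟩ := hw
      have hwx : (l.map ω).sum < x + 1 := lt_of_lt_of_le hwlt (by
        have : wordWeight (S : Set G) ω g ≤ x := hg
        unfold wordWeight at this; linarith)
      have hlen : m * l.length ≤ (l.map ω).sum := by
        have : ∀ a ∈ l.map ω, m ≤ a := by
          intro a ha
          obtain ⟨s, hs, rfl⟩ := List.mem_map.mp ha
          exact Finset.inf'_le ω (hl s hs)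
        calc m * l.length = (l.map ω).length • m := by
              rw [List.length_map, nsmul_eq_mul, mul_comm]
          _ ≤ (l.map ω).sum := List.card_nsmul_le_sum _ m this
      have hlenL : l.length ≤ L := by
        have h1 : (l.length : ℝ) ≤ (x + 1) / m := by
          rw [le_div_iff₀ hmpos, mul_comm]
          linarith
        calc l.length ≤ Nat.ceil ((l.length : ℝ)) := by simp
          _ ≤ L := Nat.ceil_le_ceil h1
      refine ⟨l, ⟨l.attachWith _ hl, hlenL.trans_eq' (by simp), ?_⟩, hlp⟩
      simp [List.map_attachWith]
    exact Set.Finite.subset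
      (((List.finite_length_le _ L).image _).image _) hsub

end aux

/-- Growth comparison for a finite-index subgroup: if `H ≤ G` has index `N` and `ω` is a
positive weight on a finite monoid-generating set `S` of `G`, then there is a constant
`K ≥ 0` with `γ_ω(n − K) ≤ N·γ_ω^H(n) ≤ γ_ω(n + K)` for all `n`, where `γ_ω^H` counts
elements of `H` of weight at most `n`. -/
theorem growth_finite_index_subgroup {G : Type*} [Group G] (S : Finset G)
    (hS : Submonoid.closure (S : Set G) = ⊤)
    (ω : G → ℝ) (hω : ∀ s ∈ S, 0 < ω s)
    (H : Subgroup G) (N : ℕ) (hN : H.index = N) (hNpos : N ≠ 0) :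
    ∃ K : ℝ, 0 ≤ K ∧ ∀ x : ℝ,
      growth (S : Set G) ω (x - K) ≤
          N * Nat.card {g : G | g ∈ H ∧ wordWeight (S : Set G) ω g ≤ x} ∧
      N * Nat.card {g : G | g ∈ H ∧ wordWeight (S : Set G) ω g ≤ x} ≤
          growth (S : Set G) ω (x + K) := by
  have hNcard : Nat.card (G ⧸ H) = N := hN
  have hfin : Finite (G ⧸ H) := Nat.finite_of_card_ne_zero (by rw [hNcard]; exact hNpos)
  have := Fintype.ofFinite (G ⧸ H)
  set w := wordWeight (S : Set G) ω with hw
  have hterm : ∀ q : G ⧸ H, 0 ≤ w q.out + w q.out⁻¹ := fun q =>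
    add_nonneg (ww_nonneg S hS ω hω _) (ww_nonneg S hS ω hω _)
  set K := ∑ q : G ⧸ H, (w q.out + w q.out⁻¹) with hK
  have hKnonneg : 0 ≤ K := Finset.sum_nonneg fun q _ => hterm q
  have hq1 : ∀ q : G ⧸ H, w q.out ≤ K := fun q =>
    le_trans (le_add_of_nonneg_right (ww_nonneg S hS ω hω _))
      (Finset.single_le_sum (fun i _ => hterm i) (Finset.mem_univ q))
  have hq2 : ∀ q : G ⧸ H, w q.out⁻¹ ≤ K := fun q =>
    le_trans (le_add_of_nonneg_left (ww_nonneg S hS ω hω _))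
      (Finset.single_le_sum (fun i _ => hterm i) (Finset.mem_univ q))
  refine ⟨K, hKnonneg, fun x => ?_⟩
  have hAfin : {g : G | g ∈ H ∧ w g ≤ x}.Finite :=
    (ball_finite S hS ω hω x).subset fun g hg => hg.2
  have hAfin' : Finite {g : G | g ∈ H ∧ w g ≤ x} := hAfin.to_subtype
  have hprod : N * Nat.card {g : G | g ∈ H ∧ w g ≤ x} =
      Nat.card ((G ⧸ H) × {g : G | g ∈ H ∧ w g ≤ x}) := by
    rw [Nat.card_prod, hNcard]
  constructor
  · -- lower bound
    rw [hprod]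
    have hballfin : Finite {g : G | w g ≤ x - K} :=
      (ball_finite S hS ω hω (x - K)).to_subtype
    refine Nat.card_le_card_of_injective
      (fun g => (⟨QuotientGroup.mk g.1,
        ⟨(QuotientGroup.mk (s := H) g.1).out⁻¹ * g.1,
          QuotientGroup.eq.mp (QuotientGroup.out_eq' (QuotientGroup.mk g.1)), ?_⟩⟩ :
        (G ⧸ H) × {g : G | g ∈ H ∧ w g ≤ x})) ?_
    · calc w ((QuotientGroup.mk (s := H) g.1).out⁻¹ * g.1)
          ≤ w (QuotientGroup.mk (s := H) g.1).out⁻¹ + w g.1 := ww_mul S hS ω hω _ _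
        _ ≤ K + (x - K) := add_le_add (hq2 _) g.2
        _ = x := by ring
    · rintro ⟨g, hg⟩ ⟨g', hg'⟩ heq
      simp only [Prod.mk.injEq, Subtype.mk.injEq] at heq
      obtain ⟨h1, h2⟩ := heq
      rw [h1] at h2
      exact Subtype.ext (mul_left_cancel h2)
  · -- upper bound
    rw [hprod]
    have hballfin : Finite {g : G | w g ≤ x + K} :=
      (ball_finite S hS ω hω (x + K)).to_subtype
    refine Nat.card_le_card_of_injective
      (fun p => (⟨p.1.out * p.2.1, ?_⟩ : {g : G | w g ≤ x + K})) ?_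
    · show w (p.1.out * p.2.1) ≤ x + K
      calc w (p.1.out * p.2.1) ≤ w p.1.out + w p.2.1 := ww_mul S hS ω hω _ _
        _ ≤ K + x := add_le_add (hq1 _) p.2.2.2
        _ = x + K := by ring
    · rintro ⟨q, g, hgH, hgw⟩ ⟨q', g', hgH', hgw'⟩ heq
      simp only [Subtype.mk.injEq] at heq
      have hqq : q = q' := by
        have e1 : QuotientGroup.mk (s := H) (q.out * g) = q := by
          rw [show QuotientGroup.mk (s := H) (q.out * g) = QuotientGroup.mk q.out from
            (QuotientGroup.eq.mpr (by simpa using hgH)).symm, QuotientGroup.out_eq']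
        have e2 : QuotientGroup.mk (s := H) (q'.out * g') = q' := by
          rw [show QuotientGroup.mk (s := H) (q'.out * g') = QuotientGroup.mk q'.out from
            (QuotientGroup.eq.mpr (by simpa using hgH')).symm, QuotientGroup.out_eq']
        rw [← e1, ← e2, heq]
      subst hqq
      have : g = g' := mul_left_cancel heq
      subst this
      rfl
end

section
/- If a nondecreasing function γ: ℝ₊ → ℝ₊ satisfies γ(ηx + K) ≥ γ(x)²/4 for all x (with constants η > 1, K ≥ 0) and γ(L) > 4 for some L, then γ(n) grows at least like e^{n^α} for α = log 2 / log η: there exist constants c > 0 and n₀ such that γ(n) ≥ e^{c n^α} for all n ≥ n₀. -/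
set_option maxHeartbeats 1600000

/-- If a nondecreasing nonnegative function `γ : ℝ₊ → ℝ₊` satisfies
`γ(ηx + K) ≥ γ(x)²/4` for all `x ≥ 0` (with `η > 1`, `K ≥ 0`) and `γ(L) > 4` for some
`L ≥ 0`, then `γ` grows at least like `e^{n^α}` for `α = log 2 / log η`: there are
`c > 0` and `n₀` with `γ(n) ≥ exp(c·n^α)` for all `n ≥ n₀`. -/
theorem growth_lower_bound_of_doubling (γ : ℝ → ℝ) (η K L : ℝ) (hη : 1 < η) (hK : 0 ≤ K)
    (hnonneg : ∀ x : ℝ, 0 ≤ x → 0 ≤ γ x)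
    (hmono : ∀ x y : ℝ, 0 ≤ x → x ≤ y → γ x ≤ γ y)
    (hineq : ∀ x : ℝ, 0 ≤ x → γ x ^ 2 / 4 ≤ γ (η * x + K))
    (hL : 0 ≤ L) (hγL : 4 < γ L) :
    ∃ c : ℝ, 0 < c ∧ ∃ n₀ : ℝ, ∀ n : ℝ, n₀ ≤ n →
      Real.exp (c * n ^ (Real.log 2 / Real.log η)) ≤ γ n := by
  have hη0 : (0:ℝ) < η := lt_trans one_pos hη
  have hlogη : 0 < Real.log η := Real.log_pos hη
  set α := Real.log 2 / Real.log η with hα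
  have hα0 : 0 < α := div_pos (Real.log_pos one_lt_two) hlogη
  set b := γ L / 4 with hbdef
  have hb1 : (1:ℝ) < b := by rw [hbdef]; linarith
  have hb0 : (0:ℝ) < b := lt_trans one_pos hb1
  set β := Real.log b with hβdef
  have hβ : 0 < β := Real.log_pos hb1
  set C := K / (η - 1) with hCdef
  have hC0 : 0 ≤ C := div_nonneg hK (by linarith)
  have hCK : (η - 1) * C = K := by
    rw [hCdef, mul_comm, div_mul_cancel₀ _ (by linarith : η - 1 ≠ 0)]
  set M := max (L + C) 1 with hMdef
  have hM1 : (1:ℝ) ≤ M := le_max_right _ _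
  have hM0 : (0:ℝ) < M := lt_of_lt_of_le one_pos hM1
  let x : ℕ → ℝ := fun k => Nat.rec L (fun _ xk => η * xk + K) k
  have hxs : ∀ k, x (k+1) = η * x k + K := fun k => rfl
  have key : ∀ k, 0 ≤ x k ∧ x k + C ≤ η ^ k * M ∧ 4 * b ^ (2^k) ≤ γ (x k) := by
    intro k
    induction k with
    | zero =>
      refine ⟨hL, ?_, ?_⟩
      · show L + C ≤ η ^ 0 * M
        rw [pow_zero, one_mul]; exact le_max_left _ _
      show 4 * b ^ (2^0) ≤ γ L
      rw [pow_zero, pow_one, hbdef]; linarith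
    | succ k ih =>
      obtain ⟨h1, h2, h3⟩ := ih
      have hxk : x (k+1) = η * x k + K := hxs k
      have hb2 : 0 ≤ 4 * b ^ (2^k) := by positivity
      have hmul : η * (x k + C) ≤ η * (η^k * M) := mul_le_mul_of_nonneg_left h2 hη0.le
      refine ⟨?_, ?_, ?_⟩
      · rw [hxk]; positivity
      · rw [hxk, pow_succ]
        nlinarith [hmul, hCK]
      · rw [hxk]
        have hi := hineq (x k) h1
        have hsq : (4 * b ^ (2^k))^2 ≤ γ (x k) ^ 2 := pow_le_pow_left₀ hb2 h3 2
        have heq : 4 * b ^ (2^(k+1)) = (4 * b ^ (2^k))^2 / 4 := by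
          rw [pow_succ, pow_mul]; ring
        rw [heq]
        calc (4 * b ^ (2^k))^2/4 ≤ γ (x k)^2/4 := by linarith
          _ ≤ γ (η * x k + K) := hi
  refine ⟨β / (2 * M ^ α), by positivity, η * M, ?_⟩
  intro n hn
  have hMα : (0:ℝ) < M ^ α := Real.rpow_pos_of_pos hM0 α
  have hnM : M ≤ n := le_trans (by nlinarith) hn
  have hn0 : 0 < n := lt_of_lt_of_le hM0 hnM
  have hdiv : η ≤ n / M := (le_div_iff₀ hM0).mpr hn
  have hdiv0 : 0 < n / M := div_pos hn0 hM0
  have hlog : Real.log η ≤ Real.log (n / M) := Real.log_le_log hη0 hdiv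
  set r := Real.log (n / M) / Real.log η with hr
  have hr1 : 1 ≤ r := (le_div_iff₀ hlogη).mpr (by linarith)
  set k := ⌊r⌋₊ with hk
  have hkr : (k:ℝ) ≤ r := Nat.floor_le (by linarith)
  have hrk : r < k + 1 := Nat.lt_floor_add_one r
  have hrlog : r * Real.log η = Real.log (n/M) := by
    rw [hr]; field_simp
  have hηk : (η:ℝ) ^ k ≤ n / M := by
    have h1 : (k:ℝ) * Real.log η ≤ Real.log (n/M) := by
      calc (k:ℝ) * Real.log η ≤ r * Real.log η := by nlinarith
        _ = Real.log (n/M) := hrlog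
    calc (η:ℝ)^k = Real.exp (Real.log η) ^ k := by rw [Real.exp_log hη0]
      _ = Real.exp ((k:ℝ) * Real.log η) := (Real.exp_nat_mul _ k).symm
      _ ≤ Real.exp (Real.log (n/M)) := Real.exp_le_exp.mpr h1
      _ = n / M := Real.exp_log hdiv0
  have hxn : x k ≤ n := by
    have h2 : η^k * M ≤ n := by
      rw [← le_div_iff₀ hM0]; exact hηk
    have := (key k).2.1
    linarith
  have hγn : 4 * b ^ (2^k) ≤ γ n := le_trans (key k).2.2 (hmono _ _ (key k).1 hxn)
  have hlog2 : 0 < Real.log 2 := Real.log_pos one_lt_two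
  have hP : (n / M) ^ α < 2 * ((2^k : ℕ) : ℝ) := by
    have h2 : Real.log (n/M) * α = r * Real.log 2 := by
      rw [hα, ← hrlog]; field_simp
    have h1 : Real.log (n/M) * α < ((k:ℝ)+1) * Real.log 2 := by
      rw [h2]; nlinarith [hrk]
    calc (n/M)^α = Real.exp (Real.log (n/M) * α) := by
          rw [Real.rpow_def_of_pos hdiv0]
      _ < Real.exp (((k:ℝ)+1) * Real.log 2) := Real.exp_lt_exp.mpr h1
      _ = 2 * ((2^k : ℕ) : ℝ) := by
          rw [add_mul, one_mul, Real.exp_add, Real.exp_nat_mul, Real.exp_log two_pos]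
          push_cast; ring
  have hfin : β / (2 * M ^ α) * n ^ α ≤ β * ((2^k : ℕ) : ℝ) := by
    have hnα : n ^ α = (n/M)^α * M^α := by
      rw [Real.div_rpow hn0.le hM0.le]; field_simp
    have heq2 : β / (2 * M ^ α) * ((n/M)^α * M^α) = β * (n/M)^α / 2 := by
      field_simp
    rw [hnα, heq2]
    have h5 : β * ((n/M)^α) ≤ β * (2 * ((2^k : ℕ) : ℝ)) :=
      mul_le_mul_of_nonneg_left hP.le hβ.le
    linarith
  calc Real.exp (β/(2*M^α) * n^α) ≤ Real.exp (β * ((2^k : ℕ) : ℝ)) :=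
        Real.exp_le_exp.mpr hfin
    _ = b ^ (2^k) := by
        rw [mul_comm, Real.exp_nat_mul, Real.exp_log hb0]
    _ ≤ 4 * b ^ (2^k) := by nlinarith [pow_pos hb0 (2^k)]
    _ ≤ γ n := hγn
end

section
/- Let Γ be a finite state automaton (a finite directed labelled graph with input transitions labelled by pairs of input words and output transitions labelled by output words), and let ∂ be a weight on words. Suppose that for every directed loop ℓ in Γ, ∂o(ℓ) < (η/2)(∂i(ℓ)₀ + ∂i(ℓ)₁). Then there exists a constant K such that for every input pair (u₀, u₁) accepted by Γ (i.e., for every path e from the initial to the final state with i(e) = (u₀□*, u₁□*)), the output word v = o(e) satisfies ∂v ≤ η·max{∂u₀, ∂u₁} + K. -/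
/-- `IsPath src tgt u p v`: the list of edges `p` forms a directed path from `u` to `v`
in the directed graph with edge source/target maps `src`, `tgt`. -/
def IsPath {V E : Type*} (src tgt : E → V) : V → List E → V → Prop
  | u, [], v => u = v
  | u, e :: p, v => src e = u ∧ IsPath src tgt (tgt e) p v

/-- The pair of input words read along a path: the concatenation, componentwise, of the
pair labels of the input transitions. -/
def inWords {E A : Type*} (lab : E → (List A × List A) ⊕ List A) (p : List E) :
    List A × List A :=
  (((p.filterMap fun e => (lab e).getLeft?).map Prod.fst).flatten,
   ((p.filterMap fun e => (lab e).getLeft?).map Prod.snd).flatten)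

/-- The output word read along a path: the concatenation of the labels of the output
transitions. -/
def outWord {E A : Type*} (lab : E → (List A × List A) ⊕ List A) (p : List E) : List A :=
  (p.filterMap fun e => (lab e).getRight?).flatten

/-- The weight of a word: the sum of the weights of its letters. -/
def wordWt {A : Type*} (w : A → ℝ) (word : List A) : ℝ := (word.map w).sum

namespace AutoAux

variable {V E A : Type*}

def endV (tgt : E → V) : V → List E → V
  | x, [] => x
  | _, e :: p => endV tgt (tgt e) p

lemma endV_append (tgt : E → V) (x : V) (a b : List E) :
    endV tgt x (a ++ b) = endV tgt (endV tgt x a) b := by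
  induction a generalizing x with
  | nil => rfl
  | cons e a ih => simp [endV, ih]

lemma eq_endV {src tgt : E → V} {x y : V} {p : List E} (h : IsPath src tgt x p y) :
    y = endV tgt x p := by
  induction p generalizing x with
  | nil => exact h.symm
  | cons e p ih => exact ih h.2

lemma isPath_append {src tgt : E → V} {x y : V} {a b : List E} :
    IsPath src tgt x (a ++ b) y ↔
      IsPath src tgt x a (endV tgt x a) ∧ IsPath src tgt (endV tgt x a) b y := by
  induction a generalizing x with
  | nil => simp [IsPath, endV]
  | cons e a ih => simp [IsPath, endV, ih, and_assoc]

lemma isPath_append' {src tgt : E → V} {x y z : V} {a b : List E}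
    (ha : IsPath src tgt x a z) (hb : IsPath src tgt z b y) :
    IsPath src tgt x (a ++ b) y := by
  rcases eq_endV ha with rfl
  exact isPath_append.2 ⟨ha, hb⟩

lemma exists_loop_split [Fintype V] {src tgt : E → V} {x y : V} {p : List E}
    (h : IsPath src tgt x p y) (hlen : Fintype.card V ≤ p.length) :
    ∃ (a ℓ b : List E) (z : V), p = a ++ (ℓ ++ b) ∧ ℓ ≠ [] ∧
      IsPath src tgt x a z ∧ IsPath src tgt z ℓ z ∧ IsPath src tgt z b y := by
  obtain ⟨i, j, hne, hfe⟩ := Fintype.exists_ne_map_eq_of_card_lt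
    (fun i : Fin (p.length + 1) => endV tgt x (p.take i)) (by simpa using Nat.lt_succ_of_le hlen)
  have hvne : (i : ℕ) ≠ (j : ℕ) := fun hc => hne (Fin.val_injective hc)
  wlog hij : (i : ℕ) < (j : ℕ) generalizing i j
  · exact this j i hne.symm hfe.symm hvne.symm (by omega)
  set a := p.take i with ha
  set ℓ := (p.drop i).take (j - i) with hℓdef
  set b := p.drop j with hb
  have hj : (j : ℕ) ≤ p.length := Nat.lt_succ_iff.mp j.isLt
  have htj : a ++ ℓ = p.take j := by
    rw [ha, hℓdef, show (j : ℕ) = i + ((j : ℕ) - i) by omega, List.take_add]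
    congr 2
    omega
  have hp : p = a ++ ℓ ++ b := by
    rw [htj, hb]; exact (List.take_append_drop _ _).symm
  have hℓne : ℓ ≠ [] := by
    apply List.ne_nil_of_length_pos
    rw [hℓdef]
    simp only [List.length_take, List.length_drop]
    omega
  have key : endV tgt x (a ++ ℓ) = endV tgt x a := by rw [htj]; exact hfe.symm
  rw [hp] at h
  have h1 := isPath_append.mp h
  have h2 := isPath_append.mp h1.1
  refine ⟨a, ℓ, b, endV tgt x a, by rw [hp, List.append_assoc], hℓne, h2.1, ?_, ?_⟩
  · have h22 := h2.2
    rwa [key] at h22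
  · have h12 := h1.2
    rwa [key] at h12

lemma wordWt_append (w : A → ℝ) (s t : List A) :
    wordWt w (s ++ t) = wordWt w s + wordWt w t := by
  simp [wordWt]

lemma wordWt_nonneg {w : A → ℝ} (hw : ∀ x, 0 ≤ w x) (s : List A) : 0 ≤ wordWt w s := by
  apply List.sum_nonneg
  intro x hx
  rcases List.mem_map.1 hx with ⟨a, _, rfl⟩
  exact hw a

lemma wordWt_replicate {w : A → ℝ} {pad : A} (hpad : w pad = 0) (k : ℕ) :
    wordWt w (List.replicate k pad) = 0 := by
  simp [wordWt, List.map_replicate, hpad]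

lemma outWord_append (lab : E → (List A × List A) ⊕ List A) (s t : List E) :
    outWord lab (s ++ t) = outWord lab s ++ outWord lab t := by
  simp [outWord]

lemma inWords_fst_append (lab : E → (List A × List A) ⊕ List A) (s t : List E) :
    (inWords lab (s ++ t)).1 = (inWords lab s).1 ++ (inWords lab t).1 := by
  simp [inWords]

lemma inWords_snd_append (lab : E → (List A × List A) ⊕ List A) (s t : List E) :
    (inWords lab (s ++ t)).2 = (inWords lab s).2 ++ (inWords lab t).2 := by
  simp [inWords]

end AutoAux

open AutoAux in
/-- Automaton lemma: let `Γ` be a finite state automaton (finite directed graph with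
input transitions labelled by pairs of words and output transitions labelled by words
over an alphabet with a weight `w ≥ 0` and a padding symbol `□` of weight 0), and
suppose every directed loop `ℓ` satisfies `∂o(ℓ) < (η/2)(∂i(ℓ)₀ + ∂i(ℓ)₁)`. Then there
is a constant `K` such that for every path `e` from the initial to the final state with
`i(e) = (u₀□*, u₁□*)`, the output satisfies `∂o(e) ≤ η·max{∂u₀, ∂u₁} + K`. -/
theorem automaton_output_bound {V E A : Type*} [Fintype V] [Fintype E]
    (src tgt : E → V) (lab : E → (List A × List A) ⊕ List A)
    (init final : V) (pad : A) (w : A → ℝ)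
    (hw : ∀ x : A, 0 ≤ w x) (hpad : w pad = 0) (η : ℝ)
    (hloop : ∀ (x : V) (ℓ : List E), ℓ ≠ [] → IsPath src tgt x ℓ x →
      wordWt w (outWord lab ℓ) <
        η / 2 * (wordWt w (inWords lab ℓ).1 + wordWt w (inWords lab ℓ).2)) :
    ∃ K : ℝ, ∀ p : List E, IsPath src tgt init p final →
      ∀ (u₀ u₁ : List A) (k₀ k₁ : ℕ),
        (inWords lab p).1 = u₀ ++ List.replicate k₀ pad →
        (inWords lab p).2 = u₁ ++ List.replicate k₁ pad →
        wordWt w (outWord lab p) ≤ η * max (wordWt w u₀) (wordWt w u₁) + K := by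
  classical
  set N := Fintype.card V with hN
  set f : List E → ℝ := fun p => wordWt w (outWord lab p) with hf
  set wi : List E → ℝ :=
    fun p => wordWt w (inWords lab p).1 + wordWt w (inWords lab p).2 with hwi
  by_cases hex : ∃ (x : V) (ℓ : List E), ℓ ≠ [] ∧ IsPath src tgt x ℓ x
  · -- there exists a loop: then η > 0
    obtain ⟨x₀, ℓ₀, hℓ₀, hx₀⟩ := hex
    have hη : 0 ≤ η := by
      by_contra hneg
      push_neg at hneg
      have h1 := hloop x₀ ℓ₀ hℓ₀ hx₀
      have h2 := wordWt_nonneg hw (outWord lab ℓ₀)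
      have h3 := wordWt_nonneg hw (inWords lab ℓ₀).1
      have h4 := wordWt_nonneg hw (inWords lab ℓ₀).2
      nlinarith
    -- constant for short paths
    obtain ⟨C, hC⟩ := ((List.finite_length_le E N).image (fun p => f p - η / 2 * wi p)).bddAbove
    have hshort : ∀ p : List E, p.length ≤ N → f p ≤ η / 2 * wi p + C := by
      intro p hp
      have := hC ⟨p, hp, rfl⟩
      linarith
    have main : ∀ (n : ℕ) (p : List E) (x y : V), p.length ≤ n → IsPath src tgt x p y →
        f p ≤ η / 2 * wi p + C := by
      intro n
      induction n with
      | zero =>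
        intro p x y hlen _
        exact hshort p (by omega)
      | succ n ih =>
        intro p x y hlen h
        by_cases hsh : p.length ≤ N
        · exact hshort p hsh
        · obtain ⟨a, ℓ, b, z, hp, hℓ, hisa, hisl, hisb⟩ := exists_loop_split h (by omega)
          have hab : IsPath src tgt x (a ++ b) y := isPath_append' hisa hisb
          have hℓpos : 0 < ℓ.length := List.length_pos_iff.mpr hℓ
          have hlenab : (a ++ b).length ≤ n := by
            have := hp ▸ hlen
            simp only [List.length_append] at this ⊢
            omega
          have h1 := ih (a ++ b) x y hlenab hab
          have h2 := hloop z ℓ hℓ hisl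
          have e1 : f p = f a + (f ℓ + f b) := by
            rw [hf]; simp only [hp, outWord_append, wordWt_append]
          have e2 : wi p = wi a + (wi ℓ + wi b) := by
            rw [hwi]
            simp only [hp, inWords_fst_append, inWords_snd_append, wordWt_append]
            ring
          have e3 : f (a ++ b) = f a + f b := by
            rw [hf]; simp only [outWord_append, wordWt_append]
          have e4 : wi (a ++ b) = wi a + wi b := by
            rw [hwi]
            simp only [inWords_fst_append, inWords_snd_append, wordWt_append]
            ring
          have h2' : f ℓ < η / 2 * wi ℓ := h2
          rw [e3, e4] at h1
          rw [e1, e2]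
          linarith
    refine ⟨C, fun p hp u₀ u₁ k₀ k₁ h0 h1 => ?_⟩
    have hb : wordWt w (outWord lab p) ≤
        η / 2 * (wordWt w (inWords lab p).1 + wordWt w (inWords lab p).2) + C :=
      main p.length p init final le_rfl hp
    rw [h0, h1, wordWt_append, wordWt_append, wordWt_replicate hpad,
      wordWt_replicate hpad] at hb
    have m0 : wordWt w u₀ ≤ max (wordWt w u₀) (wordWt w u₁) := le_max_left _ _
    have m1 : wordWt w u₁ ≤ max (wordWt w u₀) (wordWt w u₁) := le_max_right _ _
    nlinarith
  · -- no loops: all paths have length ≤ N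
    push_neg at hex
    obtain ⟨K, hK⟩ := ((List.finite_length_le E N).image
      (fun p => f p - η * max (wordWt w (inWords lab p).1) (wordWt w (inWords lab p).2))).bddAbove
    refine ⟨K, fun p hp u₀ u₁ k₀ k₁ h0 h1 => ?_⟩
    have hlen : p.length ≤ N := by
      by_contra hc
      push_neg at hc
      obtain ⟨a, ℓ, b, z, _, hℓ, _, hisl, _⟩ := exists_loop_split hp (by omega)
      exact hex z ℓ hℓ hisl
    have hb : wordWt w (outWord lab p) -
        η * max (wordWt w (inWords lab p).1) (wordWt w (inWords lab p).2) ≤ K :=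
      hK ⟨p, hlen, rfl⟩
    rw [h0, h1, wordWt_append, wordWt_append, wordWt_replicate hpad,
      wordWt_replicate hpad, add_zero, add_zero] at hb
    linarith
end
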